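/- arXiv:2310.05379 — 2 statements merged into one kernel-verified Lean document; each statement's English description precedes it below -/
import Mathlib

section
/- Let r : ℝⁿ → ℝⁿ and J : ℝⁿ → ℝ be continuously differentiable, and let a, b ∈ ℝⁿ. Define the mean Jacobian M̄ = ∫₀¹ Dr(b + θ(a − b)) dθ and the mean gradient ḡ = ∫₀¹ ∇J(b + θ(a − b)) dθ. If ψ ∈ ℝⁿ satisfies the mean-value adjoint equation M̄ᵀ ψ = −ḡ, then J(a) − J(b) = −ψ · (r(a) − r(b)). -/
/-! By the fundamental theorem of calculus along the segment from `b` to `a`, the mean Jacobian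
and the mean gradient are exact secants: `r a - r b = M̄ (a - b)` and `J a - J b = ⟪ḡ, a - b⟫`.
Hence `⟪ψ, r a - r b⟫ = ⟪M̄ᵀ ψ, a - b⟫ = -⟪ḡ, a - b⟫ = -(J a - J b)`. -/

open MeasureTheory
open scoped RealInnerProductSpace

theorem ContDiff.sub_eq_integral_fderiv_segment_apply
    {E F : Type*} [NormedAddCommGroup E] [NormedSpace ℝ E]
    [NormedAddCommGroup F] [NormedSpace ℝ F] [CompleteSpace F]
    {f : E → F} (hf : ContDiff ℝ 1 f) (a b : E) :
    f a - f b = (∫ θ in (0:ℝ)..1, fderiv ℝ f (b + θ • (a - b))) (a - b) := by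
  have hpath : Continuous fun θ : ℝ => b + θ • (a - b) := by fun_prop
  have hcont : Continuous fun θ : ℝ => fderiv ℝ f (b + θ • (a - b)) :=
    (hf.continuous_fderiv one_ne_zero).comp hpath
  have hderiv : ∀ θ : ℝ, HasDerivAt (fun θ : ℝ => f (b + θ • (a - b)))
      (fderiv ℝ f (b + θ • (a - b)) (a - b)) θ := fun θ =>
    (hf.differentiable one_ne_zero _).hasFDerivAt.comp_hasDerivAt θ
      (((hasDerivAt_id θ).smul_const (a - b)).const_add b |>.congr_deriv (one_smul ℝ _))
  rw [ContinuousLinearMap.intervalIntegral_apply (hcont.intervalIntegrable 0 1),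
    intervalIntegral.integral_eq_sub_of_hasDerivAt (fun θ _ => hderiv θ)
      ((hcont.clm_apply continuous_const).intervalIntegrable 0 1)]
  simp

theorem ContDiff.sub_eq_inner_integral_gradient_segment
    {E : Type*} [NormedAddCommGroup E] [InnerProductSpace ℝ E] [CompleteSpace E]
    {f : E → ℝ} (hf : ContDiff ℝ 1 f) (a b : E) :
    f a - f b = ⟪∫ θ in (0:ℝ)..1, gradient f (b + θ • (a - b)), a - b⟫ := by
  rw [hf.sub_eq_integral_fderiv_segment_apply a b]
  have hcomm : ∫ θ in (0:ℝ)..1, gradient f (b + θ • (a - b))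
      = (InnerProductSpace.toDual ℝ E).symm (∫ θ in (0:ℝ)..1, fderiv ℝ f (b + θ • (a - b))) :=
    (InnerProductSpace.toDual ℝ E).symm.toLinearIsometry.intervalIntegral_comp_comm _
  rw [hcomm, InnerProductSpace.toDual_symm_apply]

/-- Mean-value adjoint error representation: if `M̄ᵀ ψ = -ḡ` where `M̄` is the
mean residual Jacobian and `ḡ` the mean QoI gradient along the segment from
`b` to `a`, then `J a - J b = -ψ ⬝ (r a - r b)`. -/
theorem mean_value_adjoint_error (n : ℕ)
    (r : EuclideanSpace ℝ (Fin n) → EuclideanSpace ℝ (Fin n))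
    (J : EuclideanSpace ℝ (Fin n) → ℝ)
    (hr : ContDiff ℝ 1 r) (hJ : ContDiff ℝ 1 J)
    (a b ψ : EuclideanSpace ℝ (Fin n))
    (hψ : ContinuousLinearMap.adjoint
        (∫ θ in (0:ℝ)..1, fderiv ℝ r (b + θ • (a - b))) ψ
      = -(∫ θ in (0:ℝ)..1, gradient J (b + θ • (a - b)))) :
    J a - J b = -⟪ψ, r a - r b⟫ := by
  rw [hr.sub_eq_integral_fderiv_segment_apply, ← ContinuousLinearMap.adjoint_inner_left, hψ,
    inner_neg_left, neg_neg, hJ.sub_eq_inner_integral_gradient_segment]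
end

section
/- Let r : ℝⁿ → ℝⁿ and J : ℝⁿ → ℝ be continuously differentiable. Let b ∈ ℝⁿ satisfy r(b) = 0 (the fine-space solution) and let a ∈ ℝⁿ be arbitrary (the prolonged coarse-space solution). Define M̄ = ∫₀¹ Dr(b + θ(a − b)) dθ and ḡ = ∫₀¹ ∇J(b + θ(a − b)) dθ, and suppose ψ ∈ ℝⁿ satisfies M̄ᵀ ψ = −ḡ. Then the quantity-of-interest error admits the exact adjoint-weighted residual representation J(a) − J(b) = −ψ · r(a). -/
/-!
Along the segment `θ ↦ b + θ • (a - b)` the fundamental theorem of calculus is exact: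
`r a - r b = M̄ (a - b)` and `J a - J b = ⟪ḡ, a - b⟫`. With `r b = 0` and the adjoint
equation, `⟪ψ, r a⟫ = ⟪M̄ᵀ ψ, a - b⟫ = -⟪ḡ, a - b⟫ = -(J a - J b)`.
-/

open MeasureTheory
open scoped RealInnerProductSpace

section MeanValue

variable {E F : Type*} [NormedAddCommGroup E] [NormedSpace ℝ E]
  [NormedAddCommGroup F] [NormedSpace ℝ F]

noncomputable def meanFDeriv (f : E → F) (a b : E) : E →L[ℝ] F :=
  ∫ θ in (0:ℝ)..1, fderiv ℝ f (b + θ • (a - b))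

theorem ContDiff.intervalIntegrable_fderiv_segment {f : E → F} (hf : ContDiff ℝ 1 f) (a b : E) :
    IntervalIntegrable (fun θ : ℝ => fderiv ℝ f (b + θ • (a - b))) volume 0 1 :=
  ((hf.continuous_fderiv one_ne_zero).comp (f := fun θ : ℝ => b + θ • (a - b))
    (by fun_prop)).intervalIntegrable 0 1

theorem ContDiff.sub_eq_meanFDeriv_apply [CompleteSpace F] {f : E → F} (hf : ContDiff ℝ 1 f)
    (a b : E) :
    f a - f b = meanFDeriv f a b (a - b) := by
  have h := map_add_eq_sum_add_integral_iteratedFDeriv (n := 0) (x := b) (y := a - b)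
    (fun t _ => hf.contDiffAt)
  simp only [add_sub_cancel, zero_add, Finset.range_one, Finset.sum_singleton, Nat.factorial_zero,
    Nat.cast_one, inv_one, iteratedFDeriv_zero_apply, one_smul, pow_zero, Nat.reduceAdd,
    iteratedFDeriv_one_apply] at h
  rw [h, add_sub_cancel_left, meanFDeriv,
    ContinuousLinearMap.intervalIntegral_apply (hf.intervalIntegrable_fderiv_segment a b)]

end MeanValue

section MeanGradient

theorem ContDiff.continuous_gradient {𝕜 F : Type*} [RCLike 𝕜] [NormedAddCommGroup F]
    [InnerProductSpace 𝕜 F] [CompleteSpace F] {f : F → 𝕜} (hf : ContDiff 𝕜 1 f) :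
    Continuous (gradient f) :=
  (InnerProductSpace.toDual 𝕜 F).symm.continuous.comp (hf.continuous_fderiv one_ne_zero)

variable {E : Type*} [NormedAddCommGroup E] [InnerProductSpace ℝ E] [CompleteSpace E]

noncomputable def meanGradient (f : E → ℝ) (a b : E) : E :=
  ∫ θ in (0:ℝ)..1, gradient f (b + θ • (a - b))

theorem ContDiff.sub_eq_inner_meanGradient {f : E → ℝ} (hf : ContDiff ℝ 1 f) (a b : E) :
    f a - f b = ⟪meanGradient f a b, a - b⟫ := by
  have hgrad : IntervalIntegrable (fun θ : ℝ => gradient f (b + θ • (a - b))) volume 0 1 :=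
    (hf.continuous_gradient.comp (f := fun θ : ℝ => b + θ • (a - b))
      (by fun_prop)).intervalIntegrable 0 1
  calc f a - f b = ∫ θ in (0:ℝ)..1, fderiv ℝ f (b + θ • (a - b)) (a - b) := by
        rw [hf.sub_eq_meanFDeriv_apply, meanFDeriv,
          ContinuousLinearMap.intervalIntegral_apply (hf.intervalIntegrable_fderiv_segment a b)]
    _ = ∫ θ in (0:ℝ)..1, innerSL ℝ (a - b) (gradient f (b + θ • (a - b))) := by
        simp only [innerSL_apply_apply, inner_gradient_right, conj_trivial]
    _ = ⟪meanGradient f a b, a - b⟫ := by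
        rw [(innerSL ℝ (a - b)).intervalIntegral_comp_comm hgrad, innerSL_apply_apply,
          real_inner_comm, meanGradient]

end MeanGradient

/-- Mean-value dual-weighted residual formula: if `b` is a fine-space solution
(`r b = 0`) and `ψ` solves the mean-value adjoint equation `M̄ᵀ ψ = -ḡ`, then
the quantity-of-interest error admits the exact adjoint-weighted residual
representation `J a - J b = -ψ ⬝ r a`. -/
theorem dwr_mean_value_exact (n : ℕ)
    (r : EuclideanSpace ℝ (Fin n) → EuclideanSpace ℝ (Fin n))
    (J : EuclideanSpace ℝ (Fin n) → ℝ)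
    (hr : ContDiff ℝ 1 r) (hJ : ContDiff ℝ 1 J)
    (a b ψ : EuclideanSpace ℝ (Fin n))
    (hb : r b = 0)
    (hψ : ContinuousLinearMap.adjoint
        (∫ θ in (0:ℝ)..1, fderiv ℝ r (b + θ • (a - b))) ψ
      = -(∫ θ in (0:ℝ)..1, gradient J (b + θ • (a - b)))) :
    J a - J b = -⟪ψ, r a⟫ := by
  change ContinuousLinearMap.adjoint (meanFDeriv r a b) ψ = -meanGradient J a b at hψ
  calc J a - J b = ⟪meanGradient J a b, a - b⟫ := hJ.sub_eq_inner_meanGradient a b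
    _ = -⟪ContinuousLinearMap.adjoint (meanFDeriv r a b) ψ, a - b⟫ := by
        rw [hψ, inner_neg_left, neg_neg]
    _ = -⟪ψ, r a⟫ := by
        rw [ContinuousLinearMap.adjoint_inner_left, ← hr.sub_eq_meanFDeriv_apply, hb, sub_zero]
end
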